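/- Let φ ∈ J_{k,L;t}(χ₁ × ν) be a holomorphic Jacobi form of weight k and index t > 0 for an even positive definite lattice L, with SL₂(ℤ)-character (or multiplier system) χ₁ and Heisenberg character ν. Then the function ψ(τ,𝔷) := φ(τ, 2𝔷) is a holomorphic Jacobi form of weight k and index 4t for L with the same SL₂(ℤ)-character χ₁ and with trivial Heisenberg character, i.e. ψ ∈ J_{k,L;4t}(χ₁ × id). -/

import Mathlib

open Complex Matrix
open scoped Real BigOperators Classical

noncomputable section

abbrev SL2Z := Matrix.SpecialLinearGroup (Fin 2) ℤ

/-- The integral bilinear form attached to a Gram matrix `S`. -/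
def bilinZ {ι : Type*} [Fintype ι] (S : Matrix ι ι ℤ) (x y : ι → ℤ) : ℤ :=
  ∑ i, ∑ j, x i * S i j * y j

def bilinQ {ι : Type*} [Fintype ι] (S : Matrix ι ι ℤ) (x y : ι → ℚ) : ℚ :=
  ∑ i, ∑ j, x i * (S i j : ℚ) * y j

def bilinR {ι : Type*} [Fintype ι] (S : Matrix ι ι ℤ) (x y : ι → ℝ) : ℝ :=
  ∑ i, ∑ j, x i * (S i j : ℝ) * y j

def bilinC {ι : Type*} [Fintype ι] (S : Matrix ι ι ℤ) (x y : ι → ℂ) : ℂ :=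
  ∑ i, ∑ j, x i * (S i j : ℂ) * y j

/-- `S` is the Gram matrix of an even positive definite lattice. -/
structure IsEvenPosDef {ι : Type*} [Fintype ι] (S : Matrix ι ι ℤ) : Prop where
  symm : S.IsSymm
  posdef : ∀ x : ι → ℚ, x ≠ 0 → 0 < bilinQ S x x
  even_diag : ∀ i, (2 : ℤ) ∣ S i i

/-- `l ∈ (1/2) L^∨`, written in lattice coordinates:  `2(l,x) ∈ ℤ` for every lattice vector. -/
def InHalfDual {ι : Type*} [Fintype ι] (S : Matrix ι ι ℤ) (l : ι → ℚ) : Prop :=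
  ∀ x : ι → ℤ, ∃ m : ℤ, 2 * bilinQ S l (fun i => (x i : ℚ)) = m

/-- `φ` is a holomorphic Jacobi form of weight `k` and index `t` for the lattice `(ℤ^ι, S)`
with `SL₂(ℤ)`-character (multiplier system) `χ`, Heisenberg character `ν`,
and Fourier coefficients `f`. -/
structure IsJacobiForm {ι : Type*} [Fintype ι] (S : Matrix ι ι ℤ) (k t : ℚ)
    (χ : SL2Z → ℂ) (ν : (ι → ℤ) → (ι → ℤ) → ℂ)
    (f : ℚ × (ι → ℚ) → ℂ) (φ : ℂ → (ι → ℂ) → ℂ) : Prop where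
  holo : DifferentiableOn ℂ (fun p : ℂ × (ι → ℂ) => φ p.1 p.2) {p | 0 < p.1.im}
  modular : ∀ A : SL2Z, ∀ τ : ℂ, 0 < τ.im → ∀ z : ι → ℂ,
    φ (((A.1 0 0 : ℂ) * τ + (A.1 0 1 : ℂ)) / ((A.1 1 0 : ℂ) * τ + (A.1 1 1 : ℂ)))
        (fun i => z i / ((A.1 1 0 : ℂ) * τ + (A.1 1 1 : ℂ)))
      = χ A * ((A.1 1 0 : ℂ) * τ + (A.1 1 1 : ℂ)) ^ (k : ℂ)
        * Complex.exp ((π : ℂ) * I * (t : ℂ) * (A.1 1 0 : ℂ) * bilinC S z z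
            / ((A.1 1 0 : ℂ) * τ + (A.1 1 1 : ℂ)))
        * φ τ z
  elliptic : ∀ x y : ι → ℤ, ∀ τ : ℂ, 0 < τ.im → ∀ z : ι → ℂ,
    φ τ (fun i => z i + (x i : ℂ) * τ + (y i : ℂ))
      = ν x y * Complex.exp (-((π : ℂ) * I * (t : ℂ))
            * ((bilinZ S x x : ℂ) * τ + 2 * bilinC S (fun i => (x i : ℂ)) z))
        * φ τ z
  support : ∀ p : ℚ × (ι → ℚ), f p ≠ 0 →
    0 ≤ p.1 ∧ InHalfDual S p.2 ∧ 0 ≤ 2 * p.1 * t - bilinQ S p.2 p.2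
  expansion : ∀ τ : ℂ, 0 < τ.im → ∀ z : ι → ℂ,
    HasSum (fun p : ℚ × (ι → ℚ) =>
        f p * Complex.exp (2 * (π : ℂ) * I *
          ((p.1 : ℂ) * τ + bilinC S (fun i => (p.2 i : ℂ)) z))) (φ τ z)

/-- The Fourier coefficients `f` are supported on indices of positive hyperbolic norm
(cusp form condition). -/
def IsCuspSupport {ι : Type*} [Fintype ι] (S : Matrix ι ι ℤ) (t : ℚ)
    (f : ℚ × (ι → ℚ) → ℂ) : Prop :=
  ∀ p : ℚ × (ι → ℚ), f p ≠ 0 → 0 < 2 * p.1 * t - bilinQ S p.2 p.2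

/-- `c` is a root of unity. -/
def HasFiniteOrder (c : ℂ) : Prop := ∃ N : ℕ, 0 < N ∧ c ^ N = 1

/-! Only the triviality of the new Heisenberg character needs an argument, and only at a pair
`(τ, z₀)` with `φ(τ, z₀) ≠ 0`, since elsewhere both sides of the elliptic law vanish. Reaching
`z₀ + xτ + y` by the translations `xτ` and `y` in either order shows `exp(2πi t (x,y)) = 1`;
granted this, the elliptic law gives `ν(2x,2y) = ν(x,y)²` and `ν(-x,-y) ν(x,y) = 1`, while
`-1 ∈ SL₂(ℤ)` makes `φ(τ,·)` even up to a constant and hence `ν(-x,-y) = ν(x,y)`. Together,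
`ν(2x,2y) = 1`. The Fourier coefficients of `φ(τ, 2𝔷)` are `f(n, l/2)`. -/

section Bilinear

variable {ι : Type*} [Fintype ι] (S : Matrix ι ι ℤ)

lemma bilinC_intCast (x y : ι → ℤ) :
    bilinC S (fun i => (x i : ℂ)) (fun i => (y i : ℂ)) = bilinZ S x y := by
  simp [bilinC, bilinZ]

lemma bilinC_add_left (u v w : ι → ℂ) :
    bilinC S (fun i => u i + v i) w = bilinC S u w + bilinC S v w := by
  simp only [bilinC, add_mul, Finset.sum_add_distrib]

lemma bilinC_add_right (u v w : ι → ℂ) :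
    bilinC S u (fun i => v i + w i) = bilinC S u v + bilinC S u w := by
  simp only [bilinC, mul_add, Finset.sum_add_distrib]

lemma bilinC_neg_left (u v : ι → ℂ) : bilinC S (fun i => -u i) v = -bilinC S u v := by
  simp only [bilinC, neg_mul, Finset.sum_neg_distrib]

lemma bilinC_neg_right (u v : ι → ℂ) : bilinC S u (fun i => -v i) = -bilinC S u v := by
  simp only [bilinC, mul_neg, Finset.sum_neg_distrib]

lemma bilinC_const_mul_left (c : ℂ) (u v : ι → ℂ) :
    bilinC S (fun i => c * u i) v = c * bilinC S u v := by
  simp only [bilinC, Finset.mul_sum, mul_assoc]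

lemma bilinC_const_mul_right (c : ℂ) (u v : ι → ℂ) :
    bilinC S u (fun i => c * v i) = c * bilinC S u v := by
  simp only [bilinC, Finset.mul_sum]
  exact Finset.sum_congr rfl fun i _ => Finset.sum_congr rfl fun j _ => by ring

lemma bilinC_mul_const_right (u v : ι → ℂ) (c : ℂ) :
    bilinC S u (fun i => v i * c) = bilinC S u v * c := by
  simp only [bilinC, Finset.sum_mul, mul_assoc]

lemma bilinC_ratCast_div_two (l : ι → ℚ) (w : ι → ℂ) :
    bilinC S (fun i => ((l i / 2 : ℚ) : ℂ)) (fun i => 2 * w i)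
      = bilinC S (fun i => (l i : ℂ)) w := by
  simp only [bilinC]
  exact Finset.sum_congr rfl fun i _ => Finset.sum_congr rfl fun j _ => by push_cast; ring

lemma bilinQ_div_const_left (c : ℚ) (u v : ι → ℚ) :
    bilinQ S (fun i => u i / c) v = bilinQ S u v / c := by
  simp only [bilinQ, Finset.sum_div]
  exact Finset.sum_congr rfl fun i _ => Finset.sum_congr rfl fun j _ => by ring

lemma bilinQ_div_const_right (c : ℚ) (u v : ι → ℚ) :
    bilinQ S u (fun i => v i / c) = bilinQ S u v / c := by
  simp only [bilinQ, Finset.sum_div]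
  exact Finset.sum_congr rfl fun i _ => Finset.sum_congr rfl fun j _ => by ring

lemma bilinZ_add_left (x x' y : ι → ℤ) : bilinZ S (x + x') y = bilinZ S x y + bilinZ S x' y := by
  simp only [bilinZ, Pi.add_apply, add_mul, Finset.sum_add_distrib]

lemma bilinZ_add_right (x y y' : ι → ℤ) : bilinZ S x (y + y') = bilinZ S x y + bilinZ S x y' := by
  simp only [bilinZ, Pi.add_apply, mul_add, Finset.sum_add_distrib]

lemma bilinZ_neg_left (x y : ι → ℤ) : bilinZ S (-x) y = -bilinZ S x y := by
  simp only [bilinZ, Pi.neg_apply, neg_mul, Finset.sum_neg_distrib]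

lemma bilinZ_neg_right (x y : ι → ℤ) : bilinZ S x (-y) = -bilinZ S x y := by
  simp only [bilinZ, Pi.neg_apply, mul_neg, Finset.sum_neg_distrib]

lemma bilinZ_zero_right (x : ι → ℤ) : bilinZ S x 0 = 0 := by
  simp [bilinZ]

end Bilinear

section LatticeShift

variable {ι : Type*} {τ : ℂ}

def latticeShift (x y : ι → ℤ) (τ : ℂ) (z : ι → ℂ) : ι → ℂ :=
  fun i => z i + (x i : ℂ) * τ + (y i : ℂ)

lemma latticeShift_latticeShift (x y x' y' : ι → ℤ) (z : ι → ℂ) :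
    latticeShift x y τ (latticeShift x' y' τ z) = latticeShift (x + x') (y + y') τ z := by
  funext i
  simp only [latticeShift, Pi.add_apply, Int.cast_add]
  ring

lemma latticeShift_zero (z : ι → ℂ) : latticeShift 0 0 τ z = z := by
  funext i
  simp [latticeShift]

lemma latticeShift_neg (x y : ι → ℤ) (z : ι → ℂ) :
    latticeShift (-x) (-y) τ (fun i => -z i) = fun i => -latticeShift x y τ z i := by
  funext i
  simp only [latticeShift, Pi.neg_apply, Int.cast_neg]
  ring

end LatticeShift

section EllipticFactor

variable {ι : Type*} [Fintype ι] {S : Matrix ι ι ℤ} {t : ℚ} {τ : ℂ}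

def ellipticFactor (S : Matrix ι ι ℤ) (t : ℚ) (x : ι → ℤ) (τ : ℂ) (z : ι → ℂ) : ℂ :=
  Complex.exp (-((π : ℂ) * I * (t : ℂ))
    * ((bilinZ S x x : ℂ) * τ + 2 * bilinC S (fun i => (x i : ℂ)) z))

lemma ellipticFactor_ne_zero (S : Matrix ι ι ℤ) (t : ℚ) (x : ι → ℤ) (τ : ℂ) (z : ι → ℂ) :
    ellipticFactor S t x τ z ≠ 0 :=
  Complex.exp_ne_zero _

lemma ellipticFactor_zero (z : ι → ℂ) : ellipticFactor S t 0 τ z = 1 := by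
  simp [ellipticFactor, bilinZ, bilinC]

lemma bilinC_latticeShift (u x y : ι → ℤ) (z : ι → ℂ) :
    bilinC S (fun i => (u i : ℂ)) (latticeShift x y τ z)
      = bilinC S (fun i => (u i : ℂ)) z + bilinZ S u x * τ + bilinZ S u y := by
  unfold latticeShift
  rw [bilinC_add_right, bilinC_add_right, bilinC_mul_const_right, bilinC_intCast, bilinC_intCast]

lemma ellipticFactor_latticeShift_zero (x y : ι → ℤ) (z : ι → ℂ) :
    ellipticFactor S t x τ (latticeShift 0 y τ z)
      = ellipticFactor S t x τ z * Complex.exp (-(2 * π * I * t * bilinZ S x y)) := by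
  rw [ellipticFactor, ellipticFactor, ← Complex.exp_add, bilinC_latticeShift, bilinZ_zero_right]
  congr 1
  push_cast
  ring

lemma ellipticFactor_latticeShift_mul_self (x y : ι → ℤ) (z : ι → ℂ) :
    ellipticFactor S t x τ (latticeShift x y τ z) * ellipticFactor S t x τ z
      = ellipticFactor S t (x + x) τ z * Complex.exp (-(2 * π * I * t * bilinZ S x y)) := by
  simp only [ellipticFactor, ← Complex.exp_add, bilinC_latticeShift, Pi.add_apply, Int.cast_add,
    bilinC_add_left, bilinZ_add_left, bilinZ_add_right]
  congr 1
  ring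

lemma ellipticFactor_neg_latticeShift_mul (x y : ι → ℤ) (z : ι → ℂ) :
    ellipticFactor S t (-x) τ (latticeShift x y τ z) * ellipticFactor S t x τ z
      = Complex.exp (2 * π * I * t * bilinZ S x y) := by
  simp only [ellipticFactor, ← Complex.exp_add, bilinC_latticeShift, Pi.neg_apply, Int.cast_neg,
    bilinC_neg_left, bilinZ_neg_left, bilinZ_neg_right]
  congr 1
  ring

lemma ellipticFactor_neg_neg (x : ι → ℤ) (z : ι → ℂ) :
    ellipticFactor S t (-x) τ (fun i => -z i) = ellipticFactor S t x τ z := by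
  simp only [ellipticFactor, Pi.neg_apply, Int.cast_neg, bilinC_neg_left, bilinC_neg_right,
    bilinZ_neg_left, bilinZ_neg_right, neg_neg]

lemma ellipticFactor_add_self_two_mul (x : ι → ℤ) (z : ι → ℂ) :
    ellipticFactor S t (x + x) τ (fun i => 2 * z i) = ellipticFactor S (4 * t) x τ z := by
  simp only [ellipticFactor, Pi.add_apply, Int.cast_add, bilinC_add_left, bilinZ_add_left,
    bilinZ_add_right, bilinC_const_mul_right]
  congr 1
  push_cast
  ring

end EllipticFactor

def EllipticLaw {ι : Type*} [Fintype ι] (S : Matrix ι ι ℤ) (t : ℚ)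
    (ν : (ι → ℤ) → (ι → ℤ) → ℂ) (τ : ℂ) (F : (ι → ℂ) → ℂ) : Prop :=
  ∀ x y z, F (latticeShift x y τ z) = ν x y * ellipticFactor S t x τ z * F z

namespace EllipticLaw

variable {ι : Type*} [Fintype ι] {S : Matrix ι ι ℤ} {t : ℚ} {ν : (ι → ℤ) → (ι → ℤ) → ℂ}
  {τ : ℂ} {F : (ι → ℂ) → ℂ} {z₀ : ι → ℂ}

theorem character_ne_zero (hF : EllipticLaw S t ν τ F) (hz₀ : F z₀ ≠ 0) (x y : ι → ℤ) :
    ν x y ≠ 0 := by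
  intro hν
  have h := hF (-x) (-y) (latticeShift x y τ z₀)
  rw [latticeShift_latticeShift, neg_add_cancel, neg_add_cancel, latticeShift_zero, hF x y z₀, hν]
    at h
  simp [hz₀] at h

theorem exp_bilinZ_eq_one (hF : EllipticLaw S t ν τ F) (hz₀ : F z₀ ≠ 0) (x y : ι → ℤ) :
    Complex.exp (2 * π * I * t * bilinZ S x y) = 1 := by
  have hxy := hF x 0 (latticeShift 0 y τ z₀)
  have hyx := hF 0 y (latticeShift x 0 τ z₀)
  rw [latticeShift_latticeShift, add_zero, zero_add, hF 0 y z₀, ellipticFactor_zero,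
    ellipticFactor_latticeShift_zero] at hxy
  rw [latticeShift_latticeShift, add_zero, zero_add, hF x 0 z₀, ellipticFactor_zero, hxy] at hyx
  have hne : ν x 0 * ν 0 y * ellipticFactor S t x τ z₀ * F z₀ ≠ 0 :=
    mul_ne_zero (mul_ne_zero (mul_ne_zero (hF.character_ne_zero hz₀ x 0)
      (hF.character_ne_zero hz₀ 0 y)) (ellipticFactor_ne_zero S t x τ z₀)) hz₀
  rw [← inv_eq_one, ← Complex.exp_neg]
  exact mul_left_cancel₀ hne (by linear_combination hyx)

theorem character_neg_mul_self (hF : EllipticLaw S t ν τ F) (hz₀ : F z₀ ≠ 0) (x y : ι → ℤ) :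
    ν (-x) (-y) * ν x y = 1 := by
  have h := hF (-x) (-y) (latticeShift x y τ z₀)
  rw [latticeShift_latticeShift, neg_add_cancel, neg_add_cancel, latticeShift_zero, hF x y z₀]
    at h
  have hE := ellipticFactor_neg_latticeShift_mul (S := S) (t := t) (τ := τ) x y z₀
  rw [hF.exp_bilinZ_eq_one hz₀] at hE
  exact mul_right_cancel₀ hz₀ (by linear_combination -h - ν (-x) (-y) * ν x y * F z₀ * hE)

theorem character_add_self (hF : EllipticLaw S t ν τ F) (hz₀ : F z₀ ≠ 0) (x y : ι → ℤ) :
    ν (x + x) (y + y) = ν x y * ν x y := by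
  have h := hF x y (latticeShift x y τ z₀)
  rw [latticeShift_latticeShift, hF x y z₀, hF (x + x) (y + y) z₀] at h
  have hE := ellipticFactor_latticeShift_mul_self (S := S) (t := t) (τ := τ) x y z₀
  rw [Complex.exp_neg, hF.exp_bilinZ_eq_one hz₀, inv_one, mul_one] at hE
  exact mul_right_cancel₀ (mul_ne_zero (ellipticFactor_ne_zero S t (x + x) τ z₀) hz₀)
    (by linear_combination h + ν x y * ν x y * F z₀ * hE)

theorem character_neg_neg (hF : EllipticLaw S t ν τ F) (hz₀ : F z₀ ≠ 0) {c : ℂ}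
    (hc : ∀ z, F (fun i => -z i) = c * F z) (x y : ι → ℤ) :
    ν (-x) (-y) = ν x y := by
  have hc₀ : c ≠ 0 := by
    rintro rfl
    apply hz₀
    simpa using hc (fun i => -z₀ i)
  have h := hF (-x) (-y) (fun i => -z₀ i)
  rw [latticeShift_neg, hc, hc, hF x y z₀, ellipticFactor_neg_neg] at h
  exact (mul_right_cancel₀ (mul_ne_zero (mul_ne_zero hc₀ (ellipticFactor_ne_zero S t x τ z₀)) hz₀)
    (by linear_combination h)).symm

theorem character_add_self_eq_one (hF : EllipticLaw S t ν τ F) (hz₀ : F z₀ ≠ 0) {c : ℂ}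
    (hc : ∀ z, F (fun i => -z i) = c * F z) (x y : ι → ℤ) :
    ν (x + x) (y + y) = 1 := by
  rw [hF.character_add_self hz₀, ← hF.character_neg_mul_self hz₀ x y,
    hF.character_neg_neg hz₀ hc]

end EllipticLaw

def halfEquiv (ι : Type*) : (ℚ × (ι → ℚ)) ≃ (ℚ × (ι → ℚ)) :=
  (Equiv.refl ℚ).prodCongr (Equiv.piCongrRight fun _ => Equiv.divRight₀ 2 two_ne_zero)

lemma halfEquiv_apply {ι : Type*} (p : ℚ × (ι → ℚ)) :
    halfEquiv ι p = (p.1, fun i => p.2 i / 2) := rfl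

namespace IsJacobiForm

variable {ι : Type*} [Fintype ι] {S : Matrix ι ι ℤ} {k t : ℚ} {χ : SL2Z → ℂ}
  {ν : (ι → ℤ) → (ι → ℤ) → ℂ} {f : ℚ × (ι → ℚ) → ℂ} {φ : ℂ → (ι → ℂ) → ℂ}

theorem ellipticLaw (hφ : IsJacobiForm S k t χ ν f φ) {τ : ℂ} (hτ : 0 < τ.im) :
    EllipticLaw S t ν τ (φ τ) :=
  fun x y => hφ.elliptic x y τ hτ

theorem apply_neg (hφ : IsJacobiForm S k t χ ν f φ) {τ : ℂ} (hτ : 0 < τ.im) (z : ι → ℂ) :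
    φ τ (fun i => -z i) = χ (-1) * (-1) ^ (k : ℂ) * φ τ z := by
  simpa [div_neg] using hφ.modular (-1) τ hτ z

theorem differentiableOn_comp_two_mul (hφ : IsJacobiForm S k t χ ν f φ) :
    DifferentiableOn ℂ (fun p : ℂ × (ι → ℂ) => φ p.1 (fun i => 2 * p.2 i)) {p | 0 < p.1.im} := by
  have hlin : Differentiable ℂ (fun p : ℂ × (ι → ℂ) => (p.1, (2 : ℂ) • p.2)) :=
    differentiable_fst.prodMk ((differentiable_snd (E := ℂ)).const_smul (2 : ℂ))
  exact hφ.holo.comp hlin.differentiableOn fun p hp => hp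

theorem modular_comp_two_mul (hφ : IsJacobiForm S k t χ ν f φ) (A : SL2Z) {τ : ℂ}
    (hτ : 0 < τ.im) (z : ι → ℂ) :
    φ (((A.1 0 0 : ℂ) * τ + (A.1 0 1 : ℂ)) / ((A.1 1 0 : ℂ) * τ + (A.1 1 1 : ℂ)))
        (fun i => 2 * (z i / ((A.1 1 0 : ℂ) * τ + (A.1 1 1 : ℂ))))
      = χ A * ((A.1 1 0 : ℂ) * τ + (A.1 1 1 : ℂ)) ^ (k : ℂ)
        * Complex.exp ((π : ℂ) * I * ((4 * t : ℚ) : ℂ) * (A.1 1 0 : ℂ) * bilinC S z z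
            / ((A.1 1 0 : ℂ) * τ + (A.1 1 1 : ℂ)))
        * φ τ (fun i => 2 * z i) := by
  simp_rw [mul_div_assoc']
  rw [hφ.modular A τ hτ, bilinC_const_mul_left, bilinC_const_mul_right]
  push_cast
  ring_nf

theorem elliptic_comp_two_mul (hφ : IsJacobiForm S k t χ ν f φ) (x y : ι → ℤ) {τ : ℂ}
    (hτ : 0 < τ.im) (z : ι → ℂ) :
    φ τ (fun i => 2 * (z i + (x i : ℂ) * τ + (y i : ℂ)))
      = ellipticFactor S (4 * t) x τ z * φ τ (fun i => 2 * z i) := by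
  have hshift : (fun i => 2 * (z i + (x i : ℂ) * τ + (y i : ℂ)))
      = latticeShift (x + x) (y + y) τ (fun i => 2 * z i) := by
    funext i
    simp only [latticeShift, Pi.add_apply, Int.cast_add]
    ring
  rw [hshift, hφ.ellipticLaw hτ, ← ellipticFactor_add_self_two_mul]
  by_cases h₀ : φ τ (fun i => 2 * z i) = 0
  · simp [h₀]
  · rw [(hφ.ellipticLaw hτ).character_add_self_eq_one h₀ (hφ.apply_neg hτ), one_mul]

theorem support_halfEquiv (hφ : IsJacobiForm S k t χ ν f φ) (p : ℚ × (ι → ℚ))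
    (hp : f (halfEquiv ι p) ≠ 0) :
    0 ≤ p.1 ∧ InHalfDual S p.2 ∧ 0 ≤ 2 * p.1 * (4 * t) - bilinQ S p.2 p.2 := by
  obtain ⟨hn, hl, hnorm⟩ := hφ.support _ hp
  rw [halfEquiv_apply] at hl hnorm
  refine ⟨hn, fun v => ?_, ?_⟩
  · obtain ⟨m, hm⟩ := hl v
    refine ⟨2 * m, ?_⟩
    rw [bilinQ_div_const_left] at hm
    push_cast
    linarith
  · rw [bilinQ_div_const_left, bilinQ_div_const_right] at hnorm
    linarith

theorem hasSum_halfEquiv (hφ : IsJacobiForm S k t χ ν f φ) {τ : ℂ} (hτ : 0 < τ.im)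
    (z : ι → ℂ) :
    HasSum (fun p : ℚ × (ι → ℚ) => f (halfEquiv ι p) * Complex.exp (2 * (π : ℂ) * I *
        ((p.1 : ℂ) * τ + bilinC S (fun i => (p.2 i : ℂ)) z))) (φ τ (fun i => 2 * z i)) := by
  have hterm : (fun p : ℚ × (ι → ℚ) => f (halfEquiv ι p) * Complex.exp (2 * (π : ℂ) * I *
        ((p.1 : ℂ) * τ + bilinC S (fun i => (p.2 i : ℂ)) z)))
      = (fun q : ℚ × (ι → ℚ) => f q * Complex.exp (2 * (π : ℂ) * I *
        ((q.1 : ℂ) * τ + bilinC S (fun i => (q.2 i : ℂ)) (fun i => 2 * z i)))) ∘ halfEquiv ι := by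
    funext p
    rw [Function.comp_apply, halfEquiv_apply, bilinC_ratCast_div_two]
  rw [hterm]
  exact (halfEquiv ι).hasSum_iff.mpr (hφ.expansion τ hτ _)

end IsJacobiForm

theorem statement4_general {ι : Type*} [Fintype ι] (S : Matrix ι ι ℤ) (k t : ℚ) (χ : SL2Z → ℂ)
    (ν : (ι → ℤ) → (ι → ℤ) → ℂ) (f : ℚ × (ι → ℚ) → ℂ) (φ : ℂ → (ι → ℂ) → ℂ)
    (hφ : IsJacobiForm S k t χ ν f φ) :
    ∃ g : ℚ × (ι → ℚ) → ℂ,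
      IsJacobiForm S k (4 * t) χ (fun _ _ => 1) g
        (fun τ z => φ τ (fun i => 2 * z i)) :=
  ⟨f ∘ halfEquiv ι,
    { holo := hφ.differentiableOn_comp_two_mul
      modular := fun A _ hτ z => hφ.modular_comp_two_mul A hτ z
      elliptic := fun x y _ hτ z => by
        rw [hφ.elliptic_comp_two_mul x y hτ z, one_mul]
        rfl
      support := hφ.support_halfEquiv
      expansion := fun _ hτ z => hφ.hasSum_halfEquiv hτ z }⟩

/-- If `φ` is a Jacobi form of weight `k` and index `t` for `L`, then
`ψ(τ,𝔷) := φ(τ,2𝔷)` is a Jacobi form of weight `k` and index `4t` for `L`, with the same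
`SL₂(ℤ)`-character and trivial Heisenberg character. -/
theorem statement4 {ι : Type*} [Fintype ι] (S : Matrix ι ι ℤ) (hS : IsEvenPosDef S)
    (k t : ℚ) (ht : 0 < t)
    (χ : SL2Z → ℂ) (hχ : ∀ A, HasFiniteOrder (χ A))
    (ν : (ι → ℤ) → (ι → ℤ) → ℂ) (hν : ∀ x y, HasFiniteOrder (ν x y))
    (f : ℚ × (ι → ℚ) → ℂ) (φ : ℂ → (ι → ℂ) → ℂ)
    (hφ : IsJacobiForm S k t χ ν f φ) :
    ∃ g : ℚ × (ι → ℚ) → ℂ,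
      IsJacobiForm S k (4 * t) χ (fun _ _ => 1) g
        (fun τ z => φ τ (fun i => 2 * z i)) :=
  statement4_general S k t χ ν f φ hφ
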